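/- arXiv:2401.15765 — 2 statements merged into one kernel-verified Lean document; each statement's English description precedes it below -/
import Mathlib

section
/- Let $B_0 = \mathrm{diag}(\lambda_{0,1},\dots,\lambda_{0,n})$ and $B = \mathrm{diag}(\lambda_1,\dots,\lambda_m)$ be real diagonal matrices with $\lambda_{0,i} \neq \lambda_j$ for all $i,j$, and let $F^{\dagger}$ be an $n\times m$ real matrix. Define $U_{i,j} = 1/(\lambda_{0,i} - \lambda_j)^2$ and let $F^{\ddagger} = U * (F^{\dagger} B^{T} - B_0 F^{\dagger})$, where $*$ denotes the entrywise (Hadamard) matrix product. Then $F^{\ddagger}_{i,j} = F^{\dagger}_{i,j}/(\lambda_j - \lambda_{0,i})$ for all $i,j$, and $F^{\ddagger}$ satisfies the Sylvester relation $F^{\ddagger} B - B_0 F^{\ddagger} = F^{\dagger}$. -/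
open Matrix

namespace Matrix

variable {R K ι κ : Type*} [Fintype ι] [Fintype κ] [DecidableEq ι] [DecidableEq κ]

theorem mul_diagonal_sub_diagonal_mul_apply [CommRing R] (G : Matrix ι κ R) (a : ι → R)
    (b : κ → R) (i : ι) (j : κ) :
    (G * diagonal b - diagonal a * G) i j = (b j - a i) * G i j := by
  simp only [sub_apply, mul_diagonal, diagonal_mul]
  ring

/-- With disjoint spectra the diagonal Sylvester equation decouples into scalar equations,
so it has exactly one solution. -/
theorem mul_diagonal_sub_diagonal_mul_eq_iff [Field K] {a : ι → K} {b : κ → K}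
    (h : ∀ i j, a i ≠ b j) {F G : Matrix ι κ K} :
    G * diagonal b - diagonal a * G = F ↔ ∀ i j, G i j = F i j / (b j - a i) := by
  simp only [← Matrix.ext_iff, mul_diagonal_sub_diagonal_mul_apply]
  refine forall₂_congr fun i j => ?_
  rw [eq_div_iff (sub_ne_zero.mpr (h i j).symm), mul_comm]

end Matrix

/-- For diagonal `B₀ = diag(λ₀)`, `B = diag(λ)` with `λ₀ᵢ ≠ λⱼ` for all `i, j`,
`Uᵢⱼ = 1/(λ₀ᵢ - λⱼ)²` and `F‡ = U ∗ (F† Bᵀ - B₀ F†)` (Hadamard product), one has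
`F‡ᵢⱼ = F†ᵢⱼ/(λⱼ - λ₀ᵢ)` and the Sylvester relation `F‡ B - B₀ F‡ = F†`. -/
theorem hadamard_formula_solves_sylvester {n m : ℕ}
    (lam₀ : Fin n → ℝ) (lam : Fin m → ℝ)
    (hdist : ∀ i j, lam₀ i ≠ lam j)
    (Fdag : Matrix (Fin n) (Fin m) ℝ)
    (U : Matrix (Fin n) (Fin m) ℝ)
    (hU : ∀ i j, U i j = 1 / (lam₀ i - lam j) ^ 2)
    (Fddag : Matrix (Fin n) (Fin m) ℝ)
    (hFddag : Fddag =
      Matrix.hadamard U (Fdag * (Matrix.diagonal lam)ᵀ - Matrix.diagonal lam₀ * Fdag)) :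
    (∀ i j, Fddag i j = Fdag i j / (lam j - lam₀ i)) ∧
      Fddag * Matrix.diagonal lam - Matrix.diagonal lam₀ * Fddag = Fdag := by
  have hentry : ∀ i j, Fddag i j = Fdag i j / (lam j - lam₀ i) := by
    intro i j
    have hne : lam j - lam₀ i ≠ 0 := sub_ne_zero.mpr (hdist i j).symm
    rw [hFddag, hadamard_apply, diagonal_transpose, mul_diagonal_sub_diagonal_mul_apply, hU,
      ← neg_sub, neg_sq]
    field_simp
  exact ⟨hentry, (mul_diagonal_sub_diagonal_mul_eq_iff hdist).mpr hentry⟩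
end

section
/- Let $B_0 = \mathrm{diag}(\lambda_{0,1},\dots,\lambda_{0,n})$ and $B = \mathrm{diag}(\lambda_1,\dots,\lambda_n)$ be real diagonal $n\times n$ matrices with $B_0$ invertible and $\lambda_{0,i} \neq \lambda_j$ for all $i,j$. Let $P_0, P, F_n$ be $n\times n$ real matrices with $P_0$ invertible, let $\beta, c \in \mathbb{R}^n$, and define the source $Q(\xi) = F_n \left( P\, \exp(\xi B)\, \beta + c \right)$, $F^{\dagger} = P_0^{-1} F_n P$, $F_c = P_0^{-1} F_n$, and $F^{\ddagger}_{i,j} = F^{\dagger}_{i,j}/(\lambda_j - \lambda_{0,i})$. Then for all $x_0, x \in \mathbb{R}$, $\int_{x_0}^{x} \exp(-\xi B_0)\, P_0^{-1}\, Q(\xi)\, d\xi = \exp(-x B_0)\, F^{\ddagger}\, \exp(x B)\, \beta - \exp(-x_0 B_0)\, F^{\ddagger}\, \exp(x_0 B)\, \beta - B_0^{-1}\left( \exp(-x B_0) - \exp(-x_0 B_0) \right) F_c\, c$. -/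
/-!
Since `B₀` and `B` are diagonal with disjoint spectra, `F‡` solves the Sylvester equation
`F‡ B - B₀ F‡ = F†`, so `ξ ↦ exp(-ξ B₀) F‡ exp(ξ B)` is an antiderivative of
`ξ ↦ exp(-ξ B₀) F† exp(ξ B)`; likewise `ξ ↦ -B₀⁻¹ exp(-ξ B₀) F_c` is one of `ξ ↦ exp(-ξ B₀) F_c`.
The closed form is then the fundamental theorem of calculus.
-/

open NormedSpace

theorem hasDerivAt_exp_neg_smul_mul_mul_exp_smul {𝔸 : Type*} [NormedRing 𝔸] [NormedAlgebra ℝ 𝔸]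
    [CompleteSpace 𝔸] (a b x : 𝔸) (t : ℝ) :
    HasDerivAt (fun ξ : ℝ => exp ((-ξ) • a) * x * exp (ξ • b))
      (exp ((-t) • a) * (x * b - a * x) * exp (t • b)) t := by
  have hleft : HasDerivAt (fun ξ : ℝ => exp ((-ξ) • a)) (exp ((-t) • a) * -a) t := by
    simpa only [neg_smul, ← smul_neg] using hasDerivAt_exp_smul_const (-a) t
  exact ((hleft.mul_const x).mul (hasDerivAt_exp_smul_const' b t)).congr_deriv (by noncomm_ring)

namespace Matrix

open scoped Norms.Operator

variable {m n : Type*} [Fintype m] [Fintype n]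

theorem mul_diagonal_sub_diagonal_mul_apply_s8 {α : Type*} [CommRing α] [DecidableEq m]
    [DecidableEq n] (X : Matrix m n α) (d₀ : m → α) (d : n → α) (i : m) (j : n) :
    (X * diagonal d - diagonal d₀ * X) i j = X i j * (d j - d₀ i) := by
  simp only [sub_apply, mul_diagonal, diagonal_mul]
  ring

theorem mul_diagonal_sub_diagonal_mul_eq {α : Type*} [Field α] [DecidableEq m] [DecidableEq n]
    {X Y : Matrix m n α} {d₀ : m → α} {d : n → α} (hd : ∀ i j, d₀ i ≠ d j)
    (hX : ∀ i j, X i j = Y i j / (d j - d₀ i)) :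
    X * diagonal d - diagonal d₀ * X = Y := by
  ext i j
  rw [mul_diagonal_sub_diagonal_mul_apply_s8, hX, div_mul_cancel₀]
  exact sub_ne_zero.2 (hd i j).symm

theorem _root_.HasDerivAt.matrix_mulVec_const {f : ℝ → Matrix m n ℝ} {f' : Matrix m n ℝ} {t : ℝ}
    (hf : HasDerivAt f f' t) (v : n → ℝ) :
    HasDerivAt (fun ξ => f ξ *ᵥ v) (f' *ᵥ v) t :=
  let L : Matrix m n ℝ →ₗ[ℝ] m → ℝ :=
    { toFun := (· *ᵥ v), map_add' := fun _ _ => add_mulVec _ _ _,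
      map_smul' := fun _ _ => smul_mulVec _ _ _ }
  L.toContinuousLinearMap.hasFDerivAt.comp_hasDerivAt t hf

variable [DecidableEq m]

theorem continuous_exp_neg_smul_mul_mul_exp_smul_mulVec (a b y : Matrix m m ℝ) (v : m → ℝ) :
    Continuous fun ξ : ℝ => (exp ((-ξ) • a) * y * exp (ξ • b)) *ᵥ v :=
  continuous_iff_continuousAt.2 fun t =>
    ((hasDerivAt_exp_neg_smul_mul_mul_exp_smul a b y t).matrix_mulVec_const v).continuousAt

theorem integral_exp_neg_smul_mul_mul_exp_smul_mulVec {a b x y : Matrix m m ℝ}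
    (hxy : x * b - a * x = y) (v : m → ℝ) (s t : ℝ) :
    ∫ ξ in s..t, (exp ((-ξ) • a) * y * exp (ξ • b)) *ᵥ v
      = (exp ((-t) • a) * x * exp (t • b)) *ᵥ v - (exp ((-s) • a) * x * exp (s • b)) *ᵥ v := by
  subst hxy
  exact intervalIntegral.integral_eq_sub_of_hasDerivAt
    (fun ξ _ => (hasDerivAt_exp_neg_smul_mul_mul_exp_smul a b x ξ).matrix_mulVec_const v)
    ((continuous_exp_neg_smul_mul_mul_exp_smul_mulVec a b _ v).intervalIntegrable s t)

theorem integral_exp_neg_smul_mul_mulVec {a : Matrix m m ℝ} (ha : IsUnit a.det)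
    (y : Matrix m m ℝ) (v : m → ℝ) (s t : ℝ) :
    ∫ ξ in s..t, (exp ((-ξ) • a) * y) *ᵥ v
      = -((a⁻¹ * (exp ((-t) • a) - exp ((-s) • a)) * y) *ᵥ v) := by
  have hxy : -(a⁻¹ * y) * 0 - a * -(a⁻¹ * y) = y := by
    rw [mul_zero, zero_sub, mul_neg, neg_neg, ← Matrix.mul_assoc, mul_nonsing_inv a ha, one_mul]
  obtain ⟨u, rfl⟩ := (isUnit_iff_isUnit_det a).2 ha
  have hcomm (r : ℝ) : Commute (↑u⁻¹ : Matrix m m ℝ) (exp (r • (u : Matrix m m ℝ))) :=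
    ((Commute.refl _).smul_right r).exp_right.units_inv_left
  have hftc := integral_exp_neg_smul_mul_mul_exp_smul_mulVec hxy v s t
  simp only [smul_zero, exp_zero, Matrix.mul_one] at hftc
  rw [hftc, ← coe_units_inv, mul_sub, (hcomm (-t)).eq, (hcomm (-s)).eq, ← sub_mulVec, ← neg_mulVec]
  congr 1
  noncomm_ring

end Matrix

open Matrix

theorem source_integral_closed_form_general {n : ℕ}
    (lam₀ lam : Fin n → ℝ)
    (B₀ B : Matrix (Fin n) (Fin n) ℝ)
    (hB₀ : B₀ = Matrix.diagonal lam₀) (hB : B = Matrix.diagonal lam)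
    (hB₀inv : IsUnit B₀.det)
    (hdist : ∀ i j, lam₀ i ≠ lam j)
    (P₀ P Fn : Matrix (Fin n) (Fin n) ℝ)
    (β c : Fin n → ℝ)
    (Q : ℝ → Fin n → ℝ)
    (hQ : ∀ ξ : ℝ, Q ξ = Fn.mulVec (P.mulVec ((exp (ξ • B)).mulVec β) + c))
    (Fdag Fc Fddag : Matrix (Fin n) (Fin n) ℝ)
    (hFdag : Fdag = P₀⁻¹ * Fn * P)
    (hFc : Fc = P₀⁻¹ * Fn)
    (hFddag : ∀ i j, Fddag i j = Fdag i j / (lam j - lam₀ i)) :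
    ∀ x₀ x : ℝ,
      (∫ ξ in x₀..x, (exp ((-ξ) • B₀)).mulVec (P₀⁻¹.mulVec (Q ξ)))
        = (exp ((-x) • B₀) * Fddag * exp (x • B)).mulVec β
          - (exp ((-x₀) • B₀) * Fddag * exp (x₀ • B)).mulVec β
          - (B₀⁻¹ * (exp ((-x) • B₀) - exp ((-x₀) • B₀)) * Fc).mulVec c := by
  intro x₀ x
  have hsylvester : Fddag * B - B₀ * Fddag = Fdag := by
    rw [hB, hB₀]
    exact mul_diagonal_sub_diagonal_mul_eq hdist hFddag
  have hintegrand (ξ : ℝ) : exp ((-ξ) • B₀) *ᵥ (P₀⁻¹ *ᵥ Q ξ)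
      = (exp ((-ξ) • B₀) * Fdag * exp (ξ • B)) *ᵥ β + (exp ((-ξ) • B₀) * Fc) *ᵥ c := by
    simp only [hQ, hFdag, hFc, mulVec_add, mulVec_mulVec, Matrix.mul_assoc]
  simp_rw [hintegrand]
  rw [intervalIntegral.integral_add
      ((continuous_exp_neg_smul_mul_mul_exp_smul_mulVec _ _ _ β).intervalIntegrable _ _)
      (by simpa only [smul_zero, exp_zero, Matrix.mul_one] using
        (continuous_exp_neg_smul_mul_mul_exp_smul_mulVec B₀ 0 Fc c).intervalIntegrable x₀ x),
    integral_exp_neg_smul_mul_mul_exp_smul_mulVec hsylvester,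
    integral_exp_neg_smul_mul_mulVec hB₀inv, ← sub_eq_add_neg]

/-- Closed-form evaluation of the source integral: for diagonal `B₀ = diag(λ₀)`
(invertible) and `B = diag(λ)` with `λ₀ᵢ ≠ λⱼ`, `P₀` invertible,
source `Q(ξ) = Fₙ (P exp(ξ B) β + c)`, `F† = P₀⁻¹ Fₙ P`, `F_c = P₀⁻¹ Fₙ`,
`F‡ᵢⱼ = F†ᵢⱼ/(λⱼ - λ₀ᵢ)`, one has
`∫_{x₀}^{x} exp(-ξ B₀) P₀⁻¹ Q(ξ) dξ = exp(-x B₀) F‡ exp(x B) β - exp(-x₀ B₀) F‡ exp(x₀ B) β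
  - B₀⁻¹ (exp(-x B₀) - exp(-x₀ B₀)) F_c c`. -/
theorem source_integral_closed_form {n : ℕ}
    (lam₀ lam : Fin n → ℝ)
    (B₀ B : Matrix (Fin n) (Fin n) ℝ)
    (hB₀ : B₀ = Matrix.diagonal lam₀) (hB : B = Matrix.diagonal lam)
    (hB₀inv : IsUnit B₀.det)
    (hdist : ∀ i j, lam₀ i ≠ lam j)
    (P₀ P Fn : Matrix (Fin n) (Fin n) ℝ) (hP₀ : IsUnit P₀.det)
    (β c : Fin n → ℝ)
    (Q : ℝ → Fin n → ℝ)
    (hQ : ∀ ξ : ℝ, Q ξ = Fn.mulVec (P.mulVec ((exp (ξ • B)).mulVec β) + c))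
    (Fdag Fc Fddag : Matrix (Fin n) (Fin n) ℝ)
    (hFdag : Fdag = P₀⁻¹ * Fn * P)
    (hFc : Fc = P₀⁻¹ * Fn)
    (hFddag : ∀ i j, Fddag i j = Fdag i j / (lam j - lam₀ i)) :
    ∀ x₀ x : ℝ,
      (∫ ξ in x₀..x, (exp ((-ξ) • B₀)).mulVec (P₀⁻¹.mulVec (Q ξ)))
        = (exp ((-x) • B₀) * Fddag * exp (x • B)).mulVec β
          - (exp ((-x₀) • B₀) * Fddag * exp (x₀ • B)).mulVec β
          - (B₀⁻¹ * (exp ((-x) • B₀) - exp ((-x₀) • B₀)) * Fc).mulVec c :=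
  source_integral_closed_form_general lam₀ lam B₀ B hB₀ hB hB₀inv hdist P₀ P Fn β c Q hQ Fdag Fc
    Fddag hFdag hFc hFddag
end
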